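/- arXiv:0803.4085 — 3 statements merged into one kernel-verified Lean document; each statement's English description precedes it below -/
import Mathlib

section
/- Let Ω₀ = d(Σᵢ pᵢvⁱ − L) ∧ dt − Σᵢ dpᵢ ∧ dqⁱ on W₀ = ℝ²ⁿ⁺¹ × ℝⁿ (coordinates (t,q,v,p)). A point w ∈ W₀ satisfies i(V)(Ω₀)_w = 0 for all vectors V in the span of ∂/∂v¹,…,∂/∂vⁿ if and only if pᵢ = ∂L/∂vⁱ(t,q,v) at w for all i. Hence the first constraint submanifold W₁ equals the graph of the extended Legendre map: W₁ = {(t, q, v, ∂L/∂v(t,q,v)) : (t,q,v) ∈ ℝ × ℝⁿ × ℝⁿ}. -/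
noncomputable section

/-- `W₀ ≅ ℝ × ℝⁿ × ℝⁿ × ℝⁿ`, coordinates `(t, q, v, p)`; the same space serves
as the model for tangent vectors. -/
abbrev W0sp (n : ℕ) := ℝ × (Fin n → ℝ) × (Fin n → ℝ) × (Fin n → ℝ)

/-- Partial derivative of `L` with respect to `t`. -/
def pdt (n : ℕ) (L : ℝ → (Fin n → ℝ) → (Fin n → ℝ) → ℝ)
    (t : ℝ) (q v : Fin n → ℝ) : ℝ :=
  deriv (fun s => L s q v) t

/-- Partial derivative of `L` with respect to `qⁱ`. -/
def pdq (n : ℕ) (L : ℝ → (Fin n → ℝ) → (Fin n → ℝ) → ℝ)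
    (t : ℝ) (q v : Fin n → ℝ) (i : Fin n) : ℝ :=
  deriv (fun x => L t (Function.update q i x) v) (q i)

/-- Partial derivative of `L` with respect to `vⁱ`. -/
def pdv (n : ℕ) (L : ℝ → (Fin n → ℝ) → (Fin n → ℝ) → ℝ)
    (t : ℝ) (q v : Fin n → ℝ) (i : Fin n) : ℝ :=
  deriv (fun x => L t q (Function.update v i x)) (v i)

/-- The differential of `K = Σᵢ pᵢvⁱ − L` at the point `w = (t,q,v,p)`,
evaluated on the tangent vector `X = (Xₜ, X_q, X_v, X_p)`. -/
def dK (n : ℕ) (L : ℝ → (Fin n → ℝ) → (Fin n → ℝ) → ℝ)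
    (w X : W0sp n) : ℝ :=
  (∑ i, (w.2.2.2 i * X.2.2.1 i + w.2.2.1 i * X.2.2.2 i))
    - (pdt n L w.1 w.2.1 w.2.2.1 * X.1
        + ∑ i, pdq n L w.1 w.2.1 w.2.2.1 i * X.2.1 i
        + ∑ i, pdv n L w.1 w.2.1 w.2.2.1 i * X.2.2.1 i)

/-- The 2-form `Ω₀ = d(Σᵢ pᵢvⁱ − L) ∧ dt − Σᵢ dpᵢ ∧ dqⁱ` at `w`, evaluated on
tangent vectors `X`, `Y`. -/
def Omega0 (n : ℕ) (L : ℝ → (Fin n → ℝ) → (Fin n → ℝ) → ℝ)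
    (w X Y : W0sp n) : ℝ :=
  dK n L w X * Y.1 - dK n L w Y * X.1
    - ∑ i, (X.2.2.2 i * Y.2.1 i - Y.2.2.2 i * X.2.1 i)

/-- A point of `W₀` annihilates `Ω₀` on all `ρ̂₂⁰`-vertical vectors (those in
the span of the `∂/∂vⁱ`) iff `pᵢ = ∂L/∂vⁱ` there; hence the first constraint
submanifold `W₁` is the graph of the extended Legendre map restricted to momenta,
`{(t, q, v, ∂L/∂v(t,q,v))}`. -/
theorem first_constraint_is_graph_of_Legendre (n : ℕ)
    (L : ℝ → (Fin n → ℝ) → (Fin n → ℝ) → ℝ)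
    (hL : ContDiff ℝ (⊤ : ℕ∞) (fun w : ℝ × (Fin n → ℝ) × (Fin n → ℝ) => L w.1 w.2.1 w.2.2)) :
    (∀ (t : ℝ) (q v p : Fin n → ℝ),
      (∀ (a : Fin n → ℝ) (Y : W0sp n), Omega0 n L (t, q, v, p) (0, 0, a, 0) Y = 0)
        ↔ ∀ i, p i = pdv n L t q v i) ∧
    {w : W0sp n | ∀ (a : Fin n → ℝ) (Y : W0sp n), Omega0 n L w (0, 0, a, 0) Y = 0}
      = {w : W0sp n | ∃ (t : ℝ) (q v : Fin n → ℝ),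
          w = (t, q, v, fun i => pdv n L t q v i)} := by
  have key : ∀ (t : ℝ) (q v p : Fin n → ℝ),
      (∀ (a : Fin n → ℝ) (Y : W0sp n), Omega0 n L (t, q, v, p) (0, 0, a, 0) Y = 0)
        ↔ ∀ i, p i = pdv n L t q v i := by
    intro t q v p
    constructor
    · intro h i
      have h1 := h (Pi.single i 1) (1, 0, 0, 0)
      simp [Omega0, dK, Pi.single_apply, Finset.sum_ite_eq', mul_comm] at h1
      linarith
    · intro h a Y
      simp [Omega0, dK, h]
  refine ⟨key, ?_⟩
  ext ⟨t, q, v, p⟩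
  simp only [Set.mem_setOf_eq]
  rw [key]
  constructor
  · intro h
    exact ⟨t, q, v, by simp [Prod.ext_iff]; funext i; exact h i⟩
  · rintro ⟨t', q', v', heq⟩
    simp [Prod.ext_iff] at heq
    obtain ⟨rfl, rfl, rfl, rfl⟩ := heq
    intro i; rfl
end
end

section
/- Let X₀ = ∂/∂t + Σᵢ Fⁱ ∂/∂qⁱ + Σᵢ Gⁱ ∂/∂vⁱ + Σᵢ Hᵢ ∂/∂pᵢ be a vector field on W₀ = ℝ³ⁿ⁺¹ (coordinates (t,q,v,p)) with smooth coefficient functions. Then i(X₀)Ω₀ = 0 (with Ω₀ = d(Σᵢ pᵢvⁱ − L) ∧ dt − Σᵢ dpᵢ ∧ dqⁱ) holds at a point if and only if at that point: Fⁱ = vⁱ, pᵢ = ∂L/∂vⁱ, Hᵢ = ∂L/∂qⁱ, and −Σᵢ Fⁱ ∂L/∂qⁱ + Σᵢ Gⁱ(pᵢ − ∂L/∂vⁱ) + Σᵢ Hᵢ vⁱ = 0; moreover the last equation follows automatically from the first three. -/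
noncomputable section

private lemma omega_expand (n : ℕ) (L : ℝ → (Fin n → ℝ) → (Fin n → ℝ) → ℝ)
    (F G H : W0sp n → Fin n → ℝ) (w Y : W0sp n) :
    Omega0 n L w (1, F w, G w, H w) Y =
      (-(∑ i, F w i * pdq n L w.1 w.2.1 w.2.2.1 i)
        + (∑ i, G w i * (w.2.2.2 i - pdv n L w.1 w.2.1 w.2.2.1 i))
        + (∑ i, H w i * w.2.2.1 i)) * Y.1
      + ∑ i, (pdq n L w.1 w.2.1 w.2.2.1 i - H w i) * Y.2.1 i
      + ∑ i, (pdv n L w.1 w.2.1 w.2.2.1 i - w.2.2.2 i) * Y.2.2.1 i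
      + ∑ i, (F w i - w.2.2.1 i) * Y.2.2.2 i := by
  simp only [Omega0, dK, mul_sub, sub_mul, mul_add, add_mul, Finset.sum_add_distrib,
    Finset.sum_sub_distrib]
  ring_nf
  simp only [mul_comm]
  ring_nf

/-- For a vector field `X₀ = ∂/∂t + Fⁱ∂/∂qⁱ + Gⁱ∂/∂vⁱ + Hᵢ∂/∂pᵢ`, the equation
`i(X₀)Ω₀ = 0` holds at a point `w` iff there `Fⁱ = vⁱ`, `pᵢ = ∂L/∂vⁱ`,
`Hᵢ = ∂L/∂qⁱ` and `−ΣFⁱ∂L/∂qⁱ + ΣGⁱ(pᵢ−∂L/∂vⁱ) + ΣHᵢvⁱ = 0`; moreover the last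
equation follows from the first three. -/
theorem vector_field_equation_coordinates (n : ℕ)
    (L : ℝ → (Fin n → ℝ) → (Fin n → ℝ) → ℝ)
    (hL : ContDiff ℝ (⊤ : ℕ∞) (fun w : ℝ × (Fin n → ℝ) × (Fin n → ℝ) => L w.1 w.2.1 w.2.2))
    (F G H : W0sp n → Fin n → ℝ)
    (hF : ContDiff ℝ (⊤ : ℕ∞) F) (hG : ContDiff ℝ (⊤ : ℕ∞) G) (hH : ContDiff ℝ (⊤ : ℕ∞) H) :
    ∀ w : W0sp n,
      ((∀ Y : W0sp n, Omega0 n L w (1, F w, G w, H w) Y = 0)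
        ↔ ((∀ i, F w i = w.2.2.1 i) ∧
           (∀ i, w.2.2.2 i = pdv n L w.1 w.2.1 w.2.2.1 i) ∧
           (∀ i, H w i = pdq n L w.1 w.2.1 w.2.2.1 i) ∧
           (-(∑ i, F w i * pdq n L w.1 w.2.1 w.2.2.1 i)
             + (∑ i, G w i * (w.2.2.2 i - pdv n L w.1 w.2.1 w.2.2.1 i))
             + (∑ i, H w i * w.2.2.1 i) = 0))) ∧
      (((∀ i, F w i = w.2.2.1 i) ∧
        (∀ i, w.2.2.2 i = pdv n L w.1 w.2.1 w.2.2.1 i) ∧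
        (∀ i, H w i = pdq n L w.1 w.2.1 w.2.2.1 i)) →
          (-(∑ i, F w i * pdq n L w.1 w.2.1 w.2.2.1 i)
            + (∑ i, G w i * (w.2.2.2 i - pdv n L w.1 w.2.1 w.2.2.1 i))
            + (∑ i, H w i * w.2.2.1 i) = 0)) := by
  intro w
  have second : ((∀ i, F w i = w.2.2.1 i) ∧
        (∀ i, w.2.2.2 i = pdv n L w.1 w.2.1 w.2.2.1 i) ∧
        (∀ i, H w i = pdq n L w.1 w.2.1 w.2.2.1 i)) →
          (-(∑ i, F w i * pdq n L w.1 w.2.1 w.2.2.1 i)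
            + (∑ i, G w i * (w.2.2.2 i - pdv n L w.1 w.2.1 w.2.2.1 i))
            + (∑ i, H w i * w.2.2.1 i) = 0) := by
    rintro ⟨h1, h2, h3⟩
    simp only [h1, h3]
    have : ∀ i, w.2.2.2 i - pdv n L w.1 w.2.1 w.2.2.1 i = 0 := fun i => by rw [h2 i]; ring
    simp only [this, mul_zero, Finset.sum_const_zero, add_zero]
    rw [Finset.sum_congr rfl (fun i _ => mul_comm (w.2.2.1 i) (pdq n L w.1 w.2.1 w.2.2.1 i))]
    ring
  refine ⟨⟨fun h => ?_, fun ⟨h1, h2, h3, h4⟩ Y => ?_⟩, second⟩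
  · have hF' : ∀ j, F w j = w.2.2.1 j := by
      intro j
      have := h (0, 0, 0, Pi.single j 1)
      rw [omega_expand] at this
      simpa [Pi.single_apply, mul_ite, Finset.sum_ite_eq', sub_eq_zero] using this
    have hp' : ∀ j, w.2.2.2 j = pdv n L w.1 w.2.1 w.2.2.1 j := by
      intro j
      have := h (0, 0, Pi.single j 1, 0)
      rw [omega_expand] at this
      have := by simpa [Pi.single_apply, mul_ite, Finset.sum_ite_eq', sub_eq_zero] using this
      exact this.symm
    have hH' : ∀ j, H w j = pdq n L w.1 w.2.1 w.2.2.1 j := by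
      intro j
      have := h (0, Pi.single j 1, 0, 0)
      rw [omega_expand] at this
      have := by simpa [Pi.single_apply, mul_ite, Finset.sum_ite_eq', sub_eq_zero] using this
      exact this.symm
    exact ⟨hF', hp', hH', second ⟨hF', hp', hH'⟩⟩
  · rw [omega_expand, h4]
    have e1 : ∀ i, pdq n L w.1 w.2.1 w.2.2.1 i - H w i = 0 := fun i => by rw [h3 i]; ring
    have e2 : ∀ i, pdv n L w.1 w.2.1 w.2.2.1 i - w.2.2.2 i = 0 := fun i => by rw [h2 i]; ring
    have e3 : ∀ i, F w i - w.2.2.1 i = 0 := fun i => by rw [h1 i]; ring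
    simp [e1, e2, e3]
end
end

section
/- Suppose the real numbers G⁰,…,G^N satisfy the tangency system: (G⁰+G¹)/4 = a₀, (Gʲ⁻¹+2Gʲ+Gʲ⁺¹)/4 = aⱼ for 1 ≤ j ≤ N−1, and (G^{N−1}+G^N)/4 = a_N, for given a₀,…,a_N ∈ ℝ. Then necessarily Σ_{j=0}^{N} (−1)ʲ aⱼ = 0. Conversely, if Σ_{j=0}^{N} (−1)ʲ aⱼ = 0, then for every choice of G^N ∈ ℝ there exist unique G⁰,…,G^{N−1} solving the system. -/
noncomputable section

/-- The tangency linear system `(G⁰+G¹)/4 = a₀`,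
`(Gʲ⁻¹+2Gʲ+Gʲ⁺¹)/4 = aⱼ` for `1 ≤ j ≤ N−1`, `(G^{N−1}+G^N)/4 = a_N`. -/
def TangSys (N : ℕ) (hN : 1 ≤ N) (a G : Fin (N+1) → ℝ) : Prop :=
  ((G ⟨0, by omega⟩ + G ⟨1, by omega⟩)/4 = a ⟨0, by omega⟩) ∧
  (∀ (k : ℕ) (h1 : 1 ≤ k) (h2 : k ≤ N - 1),
    (G ⟨k-1, by omega⟩ + 2 * G ⟨k, by omega⟩ + G ⟨k+1, by omega⟩)/4 = a ⟨k, by omega⟩) ∧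
  ((G ⟨N-1, by omega⟩ + G ⟨N, by omega⟩)/4 = a ⟨N, by omega⟩)

/-!
Put `Pₖ = Gᵏ⁻¹ + Gᵏ` for `1 ≤ k ≤ N` and `P₀ = P_{N+1} = 0`. Then the whole system reads
`Pₖ + Pₖ₊₁ = 4aₖ` for `0 ≤ k ≤ N`, and the alternating sum of these equations telescopes to
`P₀ ± P_{N+1} = 0`. Conversely, when the alternating sum vanishes, solving `Pₖ + Pₖ₊₁ = 4aₖ`
backwards from `P_{N+1} = 0` gives `P₀ = 0` for free, and then `Gʲ + Gʲ⁺¹ = Pⱼ₊₁` is solved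
backwards from `G^N`. Both backward recursions have exactly one solution.
-/

open Finset

theorem sum_range_neg_one_pow_mul_eq_of_add_succ_eq {R : Type*} [CommRing R] {q b : ℕ → R}
    {n : ℕ} (h : ∀ k < n, q k + q (k + 1) = b k) :
    ∑ k ∈ range n, (-1) ^ k * b k = q 0 - (-1) ^ n * q n := by
  induction n with
  | zero => simp
  | succ n ih =>
    rw [sum_range_succ, ih fun k hk => h k (by omega), ← h n n.lt_succ_self]
    ring

section PairSums

variable {M : Type*} [AddCommGroup M]

theorem eq_of_le_of_add_succ_eq {f g : ℕ → M} {N : ℕ} (hN : f N = g N)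
    (h : ∀ j < N, f j + f (j + 1) = g j + g (j + 1)) : ∀ j ≤ N, f j = g j := by
  intro j hj
  induction hj using Nat.decreasingInduction with
  | self => exact hN
  | of_succ j hj ih => exact add_right_cancel (ih ▸ h j hj)

theorem exists_add_succ_eq (p : ℕ → M) (c : M) (N : ℕ) :
    ∃ g : ℕ → M, g N = c ∧ ∀ j < N, g j + g (j + 1) = p j := by
  induction N generalizing p with
  | zero => exact ⟨fun _ => c, rfl, by simp⟩
  | succ N ih =>
    obtain ⟨g, hgN, hg⟩ := ih (fun j => p (j + 1))
    refine ⟨fun j => Nat.casesOn j (p 0 - g 0) g, hgN, ?_⟩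
    rintro (_ | j) hj
    · exact sub_add_cancel _ _
    · exact hg j (by omega)

end PairSums

/-- The padding by zeros at both ends turns the two boundary equations of the tangency system
into instances of the interior one. -/
def paddedPairSum {M : Type*} [AddCommMonoid M] (N : ℕ) (g : ℕ → M) (k : ℕ) : M :=
  if k = 0 ∨ N < k then 0 else g (k - 1) + g k

section PaddedPairSum

variable {M R : Type*} [AddCommGroup M] [CommRing R] {N : ℕ}

theorem paddedPairSum_zero (g : ℕ → M) : paddedPairSum N g 0 = 0 := by
  simp [paddedPairSum]

theorem paddedPairSum_of_lt {k : ℕ} (g : ℕ → M) (hk : N < k) : paddedPairSum N g k = 0 := by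
  simp [paddedPairSum, hk]

theorem paddedPairSum_succ {j : ℕ} (g : ℕ → M) (hj : j < N) :
    paddedPairSum N g (j + 1) = g j + g (j + 1) := by
  simp [paddedPairSum, Nat.not_lt.2 hj]

theorem sum_range_neg_one_pow_mul_eq_zero_of_paddedPairSum {g b : ℕ → R}
    (hg : ∀ k ≤ N, paddedPairSum N g k + paddedPairSum N g (k + 1) = b k) :
    ∑ k ∈ range (N + 1), (-1) ^ k * b k = 0 := by
  rw [sum_range_neg_one_pow_mul_eq_of_add_succ_eq fun k hk => hg k (Nat.lt_succ_iff.1 hk),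
    paddedPairSum_zero, paddedPairSum_of_lt g N.lt_succ_self, mul_zero, sub_zero]

theorem exists_paddedPairSum_add_succ_eq {b : ℕ → R}
    (hb : ∑ k ∈ range (N + 1), (-1) ^ k * b k = 0) (c : R) :
    ∃ g : ℕ → R, g N = c ∧
      ∀ k ≤ N, paddedPairSum N g k + paddedPairSum N g (k + 1) = b k := by
  obtain ⟨q, hq_last, hq⟩ := exists_add_succ_eq b 0 (N + 1)
  have hq_zero : q 0 = 0 := by
    rw [sum_range_neg_one_pow_mul_eq_of_add_succ_eq hq, hq_last, mul_zero, sub_zero] at hb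
    exact hb
  obtain ⟨g, hgN, hg⟩ := exists_add_succ_eq (fun j => q (j + 1)) c N
  have hgq : ∀ k ≤ N + 1, paddedPairSum N g k = q k := by
    rintro (_ | j) hj
    · rw [paddedPairSum_zero, hq_zero]
    rcases (Nat.lt_succ_iff.1 hj).lt_or_eq with hjN | rfl
    · rw [paddedPairSum_succ g hjN, hg j hjN]
    · rw [paddedPairSum_of_lt g j.lt_succ_self, hq_last]
  refine ⟨g, hgN, fun k hk => ?_⟩
  rw [hgq k (by omega), hgq (k + 1) (by omega), hq k (by omega)]

theorem eq_of_paddedPairSum_add_succ_eq {f g b : ℕ → M}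
    (hf : ∀ k ≤ N, paddedPairSum N f k + paddedPairSum N f (k + 1) = b k)
    (hg : ∀ k ≤ N, paddedPairSum N g k + paddedPairSum N g (k + 1) = b k) (hN : f N = g N) :
    ∀ j ≤ N, f j = g j := by
  have hP : ∀ k ≤ N + 1, paddedPairSum N f k = paddedPairSum N g k :=
    eq_of_le_of_add_succ_eq
      (by rw [paddedPairSum_of_lt f N.lt_succ_self, paddedPairSum_of_lt g N.lt_succ_self])
      fun k hk => (hf k (by omega)).trans (hg k (by omega)).symm
  refine eq_of_le_of_add_succ_eq hN fun j hj => ?_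
  rw [← paddedPairSum_succ f hj, ← paddedPairSum_succ g hj, hP (j + 1) (by omega)]

end PaddedPairSum

theorem tangSys_val_iff (N : ℕ) (hN : 1 ≤ N) (a g : ℕ → ℝ) :
    TangSys N hN (fun j => a j) (fun j => g j) ↔
      ∀ k ≤ N, paddedPairSum N g k + paddedPairSum N g (k + 1) = 4 * a k := by
  have first : paddedPairSum N g 0 + paddedPairSum N g 1 = g 0 + g 1 := by
    rw [paddedPairSum_zero, paddedPairSum_succ g hN, zero_add]
  have middle : ∀ k, 1 ≤ k → k ≤ N - 1 → paddedPairSum N g k + paddedPairSum N g (k + 1)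
      = g (k - 1) + 2 * g k + g (k + 1) := by
    intro k hk1 hkN
    obtain ⟨j, rfl⟩ := Nat.exists_eq_add_of_le' hk1
    rw [paddedPairSum_succ g (by omega), paddedPairSum_succ g (by omega), Nat.add_sub_cancel]
    ring
  have last : paddedPairSum N g N + paddedPairSum N g (N + 1) = g (N - 1) + g N := by
    obtain ⟨j, rfl⟩ := Nat.exists_eq_add_of_le' hN
    rw [paddedPairSum_succ g (by omega), paddedPairSum_of_lt g (by omega), add_zero,
      Nat.add_sub_cancel]
  constructor
  · rintro ⟨h0, hmid, hN⟩ k hk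
    rcases Nat.eq_zero_or_pos k with rfl | hk0
    · rw [first]; linarith
    rcases hk.eq_or_lt with rfl | hkN
    · rw [last]; linarith
    rw [middle k hk0 (by omega)]; linarith [hmid k hk0 (by omega)]
  · intro h
    refine ⟨?_, fun k hk1 hkN => ?_, ?_⟩
    · linarith [h 0 (Nat.zero_le N)]
    · linarith [h k (by omega), middle k hk1 hkN]
    · linarith [h N le_rfl]

theorem comp_clamp_val {α : Type*} {N : ℕ} (G : Fin (N + 1) → α) :
    (fun j : Fin (N + 1) => G (Fin.clamp j N)) = G := by
  funext j
  exact congrArg G (Fin.ext (min_eq_left (Nat.lt_succ_iff.1 j.2)))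

theorem tangSys_iff (N : ℕ) (hN : 1 ≤ N) (a G : Fin (N + 1) → ℝ) :
    TangSys N hN a G ↔ ∀ k ≤ N, paddedPairSum N (fun k => G (Fin.clamp k N)) k +
      paddedPairSum N (fun k => G (Fin.clamp k N)) (k + 1) = 4 * a (Fin.clamp k N) := by
  conv_lhs => rw [← comp_clamp_val a, ← comp_clamp_val G]
  exact tangSys_val_iff N hN (fun k => a (Fin.clamp k N)) fun k => G (Fin.clamp k N)

/-- Solvability of the tangency system forces the alternating sum of the
right-hand sides to vanish; conversely, when that alternating sum vanishes,
for every value of `G^N` there is a unique solution. -/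
theorem tangency_system_solvability (N : ℕ) (hN : 1 ≤ N) (a : Fin (N+1) → ℝ) :
    (∀ G : Fin (N+1) → ℝ, TangSys N hN a G →
      ∑ j : Fin (N+1), (-1 : ℝ)^(j : ℕ) * a j = 0) ∧
    ((∑ j : Fin (N+1), (-1 : ℝ)^(j : ℕ) * a j = 0) →
      ∀ gN : ℝ, ∃! G : Fin (N+1) → ℝ, G ⟨N, by omega⟩ = gN ∧ TangSys N hN a G) := by
  have hsum : ∑ j : Fin (N+1), (-1 : ℝ)^(j : ℕ) * a j = 0 ↔
      ∑ k ∈ range (N + 1), (-1) ^ k * (4 * a (Fin.clamp k N)) = 0 := by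
    simp_rw [mul_left_comm _ (4 : ℝ), ← mul_sum, mul_eq_zero, four_ne_zero, false_or]
    conv_lhs => rw [← comp_clamp_val a]
    rw [Fin.sum_univ_eq_sum_range (fun k => (-1 : ℝ) ^ k * a (Fin.clamp k N))]
  refine ⟨fun G hG =>
    hsum.2 (sum_range_neg_one_pow_mul_eq_zero_of_paddedPairSum ((tangSys_iff N hN a G).1 hG)),
    fun hzero gN => ?_⟩
  obtain ⟨g, hgN, hg⟩ := exists_paddedPairSum_add_succ_eq (hsum.1 hzero) gN
  have hsys : TangSys N hN a (fun j => g j) := by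
    rw [← comp_clamp_val a]
    exact (tangSys_val_iff N hN (fun k => a (Fin.clamp k N)) g).2 hg
  refine ⟨fun j => g j, ⟨hgN, hsys⟩, fun G ⟨hGN, hG⟩ => ?_⟩
  have hGN' : G (Fin.clamp N N) = g N :=
    (congrArg G (Fin.ext (min_self N))).trans (hGN.trans hgN.symm)
  rw [← comp_clamp_val G]
  funext j
  exact eq_of_paddedPairSum_add_succ_eq ((tangSys_iff N hN a G).1 hG) hg hGN' j (by omega)
end
end
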